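/- Let H be a Hilbert space, S an orthogonal projection onto a closed subspace V, H' a bounded operator with range in V restricting to the identity on V, and A = H'* − H'. Then S(I − A) = H'; consequently, if ‖A‖ < 1 then S = H' (I − A)^{-1} = ∑_{j=0}^∞ H' A^j, with the Neumann series converging in operator norm. -/

import Mathlib

open ContinuousLinearMap

/-! With `A = H'* − H'`, the relations `S H' = H'` and `H' S = S` (both operators fix `V` and
map into `V`) give, after taking adjoints of the second, `S H'* = S`; hence
`S (I − A) = S − S H'* + S H' = H'`. When `‖A‖ < 1`, multiplying on the right by the Neumann
series `(I − A)⁻¹ = ∑ Aʲ` yields `S = ∑ H' Aʲ`. -/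

theorem hasSum_mul_pow_of_mul_one_sub_eq {R : Type*} [NormedRing R] [HasSummableGeomSeries R]
    {p t a : R} (h : p * (1 - a) = t) (ha : ‖a‖ < 1) :
    HasSum (fun j : ℕ => t * a ^ j) p := by
  have hsum : t * ∑' j : ℕ, a ^ j = p := by
    rw [← h, mul_assoc, mul_neg_geom_series a ha, mul_one]
  simpa only [hsum] using (summable_geometric_of_norm_lt_one ha).hasSum.mul_left t

namespace ContinuousLinearMap

theorem comp_eq_right_of_mapsTo_fixed {R M N : Type*} [Semiring R]
    [TopologicalSpace M] [AddCommMonoid M] [Module R M]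
    [TopologicalSpace N] [AddCommMonoid N] [Module R N]
    {V : Submodule R M} {P : M →L[R] M} {T : N →L[R] M}
    (hT : ∀ x, T x ∈ V) (hP : ∀ v ∈ V, P v = v) : P ∘L T = T :=
  ext fun x => hP _ (hT x)

section InnerProduct

variable {𝕜 E : Type*} [RCLike 𝕜] [NormedAddCommGroup E] [InnerProductSpace 𝕜 E]
  [CompleteSpace E]

theorem comp_adjoint_eq_of_comp_eq {S T : E →L[𝕜] E} (hS : IsSelfAdjoint S)
    (hTS : T ∘L S = S) : S ∘L adjoint T = S := by
  rw [← hS.adjoint_eq, ← adjoint_comp, hTS]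

theorem comp_one_sub_adjoint_sub_eq {S T : E →L[𝕜] E} (hS : IsSelfAdjoint S)
    (hST : S ∘L T = T) (hTS : T ∘L S = S) : S ∘L (1 - (adjoint T - T)) = T := by
  have hSTadj : S * adjoint T = S := comp_adjoint_eq_of_comp_eq hS hTS
  change S * (1 - (adjoint T - T)) = T
  rw [mul_sub, mul_one, mul_sub, hSTadj, show S * T = T from hST, sub_sub_cancel]

end InnerProduct

end ContinuousLinearMap

theorem kerzman_stein_expansion_general
    (H : Type*) [NormedAddCommGroup H] [InnerProductSpace ℂ H] [CompleteSpace H]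
    (V : Submodule ℂ H)
    (S H' : H →L[ℂ] H)
    (hSrange : ∀ x : H, S x ∈ V) (hSfix : ∀ v ∈ V, S v = v)
    (hSadj : IsSelfAdjoint S)
    (hH'range : ∀ x : H, H' x ∈ V) (hH'fix : ∀ v ∈ V, H' v = v) :
    S ∘L (1 - (adjoint H' - H')) = H' ∧
      (‖adjoint H' - H'‖ < 1 →
        HasSum (fun j : ℕ => H' ∘L (adjoint H' - H') ^ j) S) := by
  have key : S ∘L (1 - (adjoint H' - H')) = H' :=
    comp_one_sub_adjoint_sub_eq hSadj (comp_eq_right_of_mapsTo_fixed hH'range hSfix)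
      (comp_eq_right_of_mapsTo_fixed hSrange hH'fix)
  exact ⟨key, hasSum_mul_pow_of_mul_one_sub_eq key⟩

/-- Kerzman–Stein expansion: with `S` the orthogonal projection onto the closed subspace
`V`, `H'` bounded with range in `V` fixing `V`, and `A = H'* − H'`, one has
`S(I − A) = H'`; consequently, if `‖A‖ < 1` then `S = ∑_{j=0}^∞ H' Aʲ`, the Neumann
series converging in operator norm. -/
theorem kerzman_stein_expansion
    (H : Type*) [NormedAddCommGroup H] [InnerProductSpace ℂ H] [CompleteSpace H]
    (V : Submodule ℂ H) (hV : IsClosed (V : Set H))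
    (S H' : H →L[ℂ] H)
    (hSrange : ∀ x : H, S x ∈ V) (hSfix : ∀ v ∈ V, S v = v)
    (hSadj : IsSelfAdjoint S)
    (hH'range : ∀ x : H, H' x ∈ V) (hH'fix : ∀ v ∈ V, H' v = v) :
    S ∘L (1 - (adjoint H' - H')) = H' ∧
      (‖adjoint H' - H'‖ < 1 →
        HasSum (fun j : ℕ => H' ∘L (adjoint H' - H') ^ j) S) :=
  kerzman_stein_expansion_general H V S H' hSrange hSfix hSadj hH'range hH'fix
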